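/- The function g satisfies g(r) → 0 as r → 0⁺. -/

import Mathlib

open Real Set Filter

/-- Complete elliptic integral of the first kind. -/
noncomputable def K (r : ℝ) : ℝ :=
  ∫ θ in (0:ℝ)..(π/2), 1 / Real.sqrt (1 - r^2 * Real.sin θ ^ 2)

/-- Complete elliptic integral of the second kind. -/
noncomputable def E (r : ℝ) : ℝ :=
  ∫ θ in (0:ℝ)..(π/2), Real.sqrt (1 - r^2 * Real.sin θ ^ 2)

/-- Complementary complete elliptic integral of the first kind: `K'(r) = K(√(1-r²))`. -/
noncomputable def K' (r : ℝ) : ℝ := K (Real.sqrt (1 - r^2))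

/-- Complementary complete elliptic integral of the second kind: `E'(r) = E(√(1-r²))`. -/
noncomputable def E' (r : ℝ) : ℝ := E (Real.sqrt (1 - r^2))

/-- The special function `m(r) = (2/π) r'² K(r) K'(r)` (here `r'² = 1 - r²`). -/
noncomputable def m (r : ℝ) : ℝ := (2/π) * (1 - r^2) * K r * K' r

/-- The function `g` from Lemma 2.2. -/
noncomputable def g (r : ℝ) : ℝ :=
  K r * K' r * (E r * E' r + r^2 * K r * K' r - K r * E' r) / (4 * E' r * K r - π)^2

/-!
As `r → 0⁺`, `K r ≥ π/2` stays bounded, `0 ≤ K r - E r ≤ r² K r`, `1 ≤ E' r ≤ π/2`, and `K' r`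
grows at most like `r^(-1/2)` (a crude substitute for its logarithmic growth). Writing the
numerator of `g` as `K K' ((E - K) E' + r² K K')`, it is therefore `O(r)`, while
`4 E' K - π ≥ π` keeps the denominator away from `0`; hence `|g r| ≤ 11 r`.
-/

section IntegralBounds

variable {f : ℝ → ℝ} {a b C : ℝ}

lemma integral_le_mul_sub_of_le (hab : a ≤ b) (hf : Continuous f)
    (h : ∀ x ∈ Icc a b, f x ≤ C) : ∫ x in a..b, f x ≤ C * (b - a) := by
  simpa [mul_comm] using intervalIntegral.integral_mono_on (μ := MeasureTheory.volume) hab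
    (hf.intervalIntegrable a b) intervalIntegrable_const h

lemma mul_sub_le_integral_of_le (hab : a ≤ b) (hf : Continuous f)
    (h : ∀ x ∈ Icc a b, C ≤ f x) : C * (b - a) ≤ ∫ x in a..b, f x := by
  simpa [mul_comm] using intervalIntegral.integral_mono_on (μ := MeasureTheory.volume) hab
    intervalIntegrable_const (hf.intervalIntegrable a b) h

end IntegralBounds

lemma one_div_sqrt_le_one_div {c u : ℝ} (hc : 0 < c) (h : c ^ 2 ≤ u) : 1 / √u ≤ 1 / c :=
  one_div_le_one_div_of_le hc ((le_sqrt' hc).2 h)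

section EllipticIntegrand

variable {s : ℝ}

lemma one_sub_sq_mul_sin_sq_pos (hs : s ^ 2 < 1) (θ : ℝ) : 0 < 1 - s ^ 2 * sin θ ^ 2 := by
  nlinarith [sin_sq_le_one θ, sq_nonneg s, sq_nonneg (sin θ)]

lemma one_sub_sq_mul_sin_sq_le_one (s θ : ℝ) : 1 - s ^ 2 * sin θ ^ 2 ≤ 1 := by
  nlinarith [sq_nonneg (s * sin θ)]

lemma continuous_sqrt_one_sub_sq_mul_sin_sq (s : ℝ) :
    Continuous fun θ => √(1 - s ^ 2 * sin θ ^ 2) := by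
  fun_prop

lemma continuous_one_div_sqrt_one_sub_sq_mul_sin_sq (hs : s ^ 2 < 1) :
    Continuous fun θ => 1 / √(1 - s ^ 2 * sin θ ^ 2) :=
  continuous_const.div (continuous_sqrt_one_sub_sq_mul_sin_sq s)
    fun θ => (sqrt_pos.2 (one_sub_sq_mul_sin_sq_pos hs θ)).ne'

end EllipticIntegrand

section CompleteEllipticIntegrals

variable {s : ℝ}

lemma pi_div_two_le_K (hs : s ^ 2 < 1) : π / 2 ≤ K s := by
  simpa [K] using mul_sub_le_integral_of_le (C := 1) pi_div_two_pos.le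
    (continuous_one_div_sqrt_one_sub_sq_mul_sin_sq hs) fun θ _ => by
      rw [le_div_iff₀ (sqrt_pos.2 (one_sub_sq_mul_sin_sq_pos hs θ)), one_mul]
      exact sqrt_le_one.2 (one_sub_sq_mul_sin_sq_le_one s θ)

lemma K_le (hs : s ^ 2 < 1) : K s ≤ π / 2 / √(1 - s ^ 2) := by
  have hc : 0 < √(1 - s ^ 2) := sqrt_pos.2 (by linarith)
  have := integral_le_mul_sub_of_le pi_div_two_pos.le
    (continuous_one_div_sqrt_one_sub_sq_mul_sin_sq hs) fun θ _ =>
      one_div_sqrt_le_one_div hc (by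
        rw [sq_sqrt (by linarith)]; nlinarith [sin_sq_le_one θ, sq_nonneg s])
  rw [K]
  convert this using 1
  ring

lemma K_le_two (hs : s ^ 2 ≤ 1 / 4) : K s ≤ 2 := by
  have hpi : π / 4 ≤ √(1 - s ^ 2) := by
    rw [le_sqrt (by positivity) (by linarith)]
    nlinarith [pi_lt_d2, pi_pos]
  calc K s ≤ π / 2 / √(1 - s ^ 2) := K_le (by linarith)
    _ ≤ π / 2 / (π / 4) := by gcongr
    _ = 2 := by field_simp; norm_num

lemma E_le_pi_div_two (s : ℝ) : E s ≤ π / 2 := by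
  simpa [E] using integral_le_mul_sub_of_le (C := 1) pi_div_two_pos.le
    (continuous_sqrt_one_sub_sq_mul_sin_sq s) fun θ _ =>
      sqrt_le_one.2 (one_sub_sq_mul_sin_sq_le_one s θ)

lemma one_le_E (hs : s ^ 2 ≤ 1) : 1 ≤ E s := by
  have h := intervalIntegral.integral_mono_on (μ := MeasureTheory.volume) pi_div_two_pos.le
    (continuous_cos.intervalIntegrable 0 (π / 2))
    ((continuous_sqrt_one_sub_sq_mul_sin_sq s).intervalIntegrable 0 (π / 2)) fun θ hθ => by
      have hcos : 0 ≤ cos θ := cos_nonneg_of_mem_Icc ⟨by linarith [hθ.1, pi_pos], hθ.2⟩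
      rw [← sqrt_sq hcos, cos_sq']
      exact sqrt_le_sqrt (by nlinarith [sin_sq_le_one θ, sq_nonneg (sin θ)])
  simpa [E] using h

lemma E_le_K (hs : s ^ 2 < 1) : E s ≤ K s :=
  intervalIntegral.integral_mono_on (μ := MeasureTheory.volume) pi_div_two_pos.le
    ((continuous_sqrt_one_sub_sq_mul_sin_sq s).intervalIntegrable _ _)
    ((continuous_one_div_sqrt_one_sub_sq_mul_sin_sq hs).intervalIntegrable _ _) fun θ _ => by
      have hu := one_sub_sq_mul_sin_sq_pos hs θ
      rw [le_div_iff₀ (sqrt_pos.2 hu), mul_self_sqrt hu.le]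
      exact one_sub_sq_mul_sin_sq_le_one s θ

/-- Pointwise, `1/√u - √u = (1 - u)/√u` with `1 - u = s² sin² θ ≤ s²`. -/
lemma K_sub_E_le (hs : s ^ 2 < 1) : K s - E s ≤ s ^ 2 * K s := by
  have hK := continuous_one_div_sqrt_one_sub_sq_mul_sin_sq hs
  have hE := continuous_sqrt_one_sub_sq_mul_sin_sq s
  rw [K, E, ← intervalIntegral.integral_sub (hK.intervalIntegrable _ _)
    (hE.intervalIntegrable _ _), ← intervalIntegral.integral_const_mul]
  refine intervalIntegral.integral_mono_on pi_div_two_pos.le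
    ((hK.sub hE).intervalIntegrable _ _) ((hK.const_mul _).intervalIntegrable _ _) fun θ _ => ?_
  have hu := one_sub_sq_mul_sin_sq_pos hs θ
  have hsqrt := sqrt_pos.2 hu
  rw [mul_one_div, div_sub' hsqrt.ne', div_le_div_iff_of_pos_right hsqrt, mul_self_sqrt hu.le]
  nlinarith [sin_sq_le_one θ, sq_nonneg s]

end CompleteEllipticIntegrals

section Complementary

variable {r : ℝ}

lemma sq_sqrt_one_sub_sq (hr : r ^ 2 ≤ 1) : √(1 - r ^ 2) ^ 2 = 1 - r ^ 2 :=
  sq_sqrt (by linarith)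

lemma one_le_E' (hr : r ^ 2 ≤ 1) : 1 ≤ E' r :=
  one_le_E (by rw [sq_sqrt_one_sub_sq hr]; nlinarith [sq_nonneg r])

lemma pi_div_two_le_K' (hr0 : r ≠ 0) (hr : r ^ 2 ≤ 1) : π / 2 ≤ K' r :=
  pi_div_two_le_K (by rw [sq_sqrt_one_sub_sq hr]; linarith [pow_two_pos_of_ne_zero hr0])

/-- Split `[0, π/2]` at `π/2 - t`: on the left the integrand is at most `1 / cos θ ≤ π / (2t)`,
on the right (of length `t`) it is at most `1 / t²`. -/
lemma K'_sq_le {t : ℝ} (ht0 : 0 < t) (ht1 : t ≤ 1) : K' (t ^ 2) ≤ 4 / t := by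
  have hr : (t ^ 2) ^ 2 ≤ 1 := by nlinarith [pow_le_one₀ ht0.le ht1 (n := 4)]
  have hu (θ : ℝ) :
      1 - √(1 - (t ^ 2) ^ 2) ^ 2 * sin θ ^ 2 = cos θ ^ 2 + (t ^ 2) ^ 2 * sin θ ^ 2 := by
    rw [sq_sqrt_one_sub_sq hr, cos_sq']; ring
  have hf : Continuous fun θ => 1 / √(1 - √(1 - (t ^ 2) ^ 2) ^ 2 * sin θ ^ 2) :=
    continuous_one_div_sqrt_one_sub_sq_mul_sin_sq (by
      rw [sq_sqrt_one_sub_sq hr]; nlinarith [pow_pos ht0 4])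
  have htpi : t ≤ π / 2 := by linarith [pi_gt_three]
  have hfar := integral_le_mul_sub_of_le (C := 1 / (2 / π * t)) (a := 0) (b := π / 2 - t)
    (by linarith) hf fun θ hθ => by
      have hcos : 2 / π * t ≤ cos θ := calc
        2 / π * t ≤ sin t := mul_le_sin ht0.le htpi
        _ = cos (π / 2 - t) := (cos_pi_div_two_sub t).symm
        _ ≤ cos θ := cos_le_cos_of_nonneg_of_le_pi hθ.1 (by linarith [pi_pos]) hθ.2
      refine one_div_sqrt_le_one_div (by positivity) ?_
      rw [hu]
      nlinarith [pow_le_pow_left₀ (by positivity) hcos 2, sq_nonneg (t ^ 2 * sin θ)]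
  have hnear := integral_le_mul_sub_of_le (C := 1 / t ^ 2) (a := π / 2 - t) (b := π / 2)
    (by linarith) hf fun θ _ => by
      refine one_div_sqrt_le_one_div (by positivity) ?_
      rw [hu]
      nlinarith [cos_sq_add_sin_sq θ, sq_nonneg (cos θ), pow_le_one₀ ht0.le ht1 (n := 4)]
  rw [K', K, ← intervalIntegral.integral_add_adjacent_intervals (b := π / 2 - t)
    (hf.intervalIntegrable _ _) (hf.intervalIntegrable _ _)]
  calc _ ≤ 1 / (2 / π * t) * (π / 2 - t - 0) + 1 / t ^ 2 * (π / 2 - (π / 2 - t)) :=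
        add_le_add hfar hnear
    _ ≤ (π ^ 2 / 4 + 1) / t := by
        field_simp
        nlinarith [pi_pos]
    _ ≤ 4 / t := by gcongr; nlinarith [pi_lt_d2, pi_pos]

end Complementary

lemma pi_le_four_mul_E'_mul_K_sub_pi {r : ℝ} (hr : r ^ 2 < 1) : π ≤ 4 * E' r * K r - π := by
  nlinarith [pi_div_two_le_K hr, one_le_E' hr.le, pi_pos]

lemma abs_g_numerator_le {t : ℝ} (ht0 : 0 < t) (ht1 : t ≤ 1 / 2) :
    |K (t ^ 2) * K' (t ^ 2) *
      (E (t ^ 2) * E' (t ^ 2) + (t ^ 2) ^ 2 * K (t ^ 2) * K' (t ^ 2) - K (t ^ 2) * E' (t ^ 2))|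
      ≤ 96 * t ^ 2 := by
  have hs : (t ^ 2) ^ 2 ≤ 1 / 4 := by nlinarith [pow_le_pow_left₀ ht0.le ht1 4]
  have hKlo := pi_div_two_le_K (s := t ^ 2) (by linarith)
  have hKhi := K_le_two hs
  have hK'lo := pi_div_two_le_K' (pow_pos ht0 2).ne' (by linarith)
  have hK'hi := K'_sq_le ht0 (by linarith)
  have hEK : |E (t ^ 2) - K (t ^ 2)| ≤ (t ^ 2) ^ 2 * K (t ^ 2) := by
    rw [abs_sub_comm, abs_of_nonneg (sub_nonneg.2 (E_le_K (by linarith)))]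
    exact K_sub_E_le (by linarith)
  have hE'lo := one_le_E' (r := t ^ 2) (by linarith)
  have hE'hi : E' (t ^ 2) ≤ π / 2 := E_le_pi_div_two _
  set a := K (t ^ 2)
  set b := K' (t ^ 2)
  set c := E (t ^ 2)
  set d := E' (t ^ 2)
  have ha0 : 0 ≤ a := by linarith [pi_pos]
  have hb0 : 0 ≤ b := by linarith [pi_pos]
  have hd0 : 0 ≤ d := by linarith
  have htb : t * b ≤ 4 := by rwa [le_div_iff₀ ht0, mul_comm] at hK'hi
  calc _ = a * b * |(c - a) * d + (t ^ 2) ^ 2 * a * b| := by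
        rw [abs_mul, abs_mul, abs_of_nonneg ha0, abs_of_nonneg hb0]
        ring_nf
    _ ≤ a * b * ((t ^ 2) ^ 2 * a * d + (t ^ 2) ^ 2 * a * b) := by
        gcongr
        refine (abs_add_le _ _).trans (add_le_add ?_ (abs_of_nonneg (by positivity)).le)
        rw [abs_mul, abs_of_nonneg hd0]
        gcongr
    _ = t ^ 2 * a ^ 2 * (t * b) * (t * d + t * b) := by ring
    _ ≤ t ^ 2 * 2 ^ 2 * 4 * (1 * 2 + 4) := by gcongr <;> linarith [pi_lt_d2]
    _ = 96 * t ^ 2 := by ring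

lemma abs_g_le {r : ℝ} (hr0 : 0 < r) (hr : r ≤ 1 / 4) : |g r| ≤ 11 * r := by
  obtain ⟨t, ht0, rfl⟩ : ∃ t, 0 < t ∧ t ^ 2 = r := ⟨√r, sqrt_pos.2 hr0, sq_sqrt hr0.le⟩
  have ht1 : t ≤ 1 / 2 := by nlinarith
  have hden : π ^ 2 ≤ (4 * E' (t ^ 2) * K (t ^ 2) - π) ^ 2 :=
    pow_le_pow_left₀ pi_pos.le (pi_le_four_mul_E'_mul_K_sub_pi (by nlinarith)) 2
  have hpi : 9 < π ^ 2 := by nlinarith [pi_gt_three]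
  rw [g, abs_div, abs_sq]
  calc _ ≤ 96 * t ^ 2 / π ^ 2 := by gcongr; exact abs_g_numerator_le ht0 ht1
    _ ≤ 11 * t ^ 2 := by
        rw [div_le_iff₀ (by positivity)]
        nlinarith [pow_pos ht0 2]

theorem stmt_13 : Filter.Tendsto g (nhdsWithin 0 (Set.Ioi (0:ℝ))) (nhds 0) := by
  have hlin : Tendsto (fun r : ℝ => 11 * r) (nhds 0) (nhds 0) := by
    simpa using (continuous_const_mul (11 : ℝ)).tendsto 0
  refine squeeze_zero_norm' ?_ (tendsto_nhdsWithin_of_tendsto_nhds hlin)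
  filter_upwards [Ioo_mem_nhdsGT (by norm_num : (0 : ℝ) < 1 / 4)] with r hr
  exact abs_g_le hr.1 hr.2.le
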